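/- arXiv:math/0112183 — 2 statements merged into one kernel-verified Lean document; each statement's English description precedes it below -/
import Mathlib

section
/- Let W be the Weyl group of a root system with simple roots Δ, and let W_P be the parabolic subgroup generated by the simple reflections s_β for β in a subset Δ_P of Δ. If s and s' are reflections in W neither of which lies in W_P, and s' = s·a for some a in W_P, then s' = s. -/
/-!
Model the roots of `W` by pairs `(t, ε)` of a reflection and a sign, on which `W` acts through
`signRep`; `eta w t = -1` says that `w` sends the positive root of `t` to a negative one. Elements
of `W_P` keep the positive roots of reflections outside `W_P` positive, and this forces
`eta s (a * s) = -1` when `s' = s * a`. Hence `a * s` occurs in the right inversion sequence of a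
palindromic reduced word for `s`, at some position `j`, and `s'` is then the `j`-th entry of its
left inversion sequence. If `j` is the middle position this entry is `s` itself; otherwise `s'`
or `a * s` is a shorter reflection in the same situation, and we conclude by induction on length.
-/

namespace CoxeterSystem

variable {B W : Type*} [Group W] {M : CoxeterMatrix B} (cs : CoxeterSystem M W)

local prefix:100 "σ" => cs.simple
local prefix:100 "π" => cs.wordProd
local prefix:100 "ℓ" => cs.length

theorem simple_mul_mul_simple_eq_simple_iff (i : B) (w : W) : σ i * w * σ i = σ i ↔ w = σ i := by
  rw [mul_assoc, mul_eq_left, mul_eq_one_iff_eq_inv, inv_simple]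

open Classical in
/-- `(t, ε)` stands for the root `ε • α_t`, and `simplePerm i` is the action of `σ i` on roots. -/
noncomputable def simplePerm (i : B) : Equiv.Perm (W × ℤˣ) :=
  Function.Involutive.toPerm (fun p => (σ i * p.1 * σ i, (if p.1 = σ i then -1 else 1) * p.2)) <| by
    rintro ⟨w, ε⟩
    simp only [simple_mul_mul_simple_eq_simple_iff, ← mul_assoc, Int.units_mul_self, one_mul,
      simple_mul_simple_self, simple_mul_simple_cancel_right]

open Classical in
theorem simplePerm_apply (i : B) (w : W) (ε : ℤˣ) :
    cs.simplePerm i (w, ε) = (σ i * w * σ i, (if w = σ i then -1 else 1) * ε) := rfl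

open Classical in
theorem pow_simplePerm_mul_simplePerm_apply (i i' : B) (q : ℕ) (w : W) (ε : ℤˣ) :
    ((cs.simplePerm i * cs.simplePerm i') ^ q) (w, ε) =
      ((σ i * σ i') ^ q * w * ((σ i * σ i') ^ q)⁻¹,
        (∏ c ∈ Finset.range (2 * q), if w = σ i' * (σ i * σ i') ^ c then -1 else 1) * ε) := by
  set g := σ i * σ i'
  have hconj_g (w : W) : σ i * (σ i' * w * σ i') * σ i = g * w * g⁻¹ := by simp [g, mul_assoc]
  have hg : g⁻¹ * σ i' = σ i' * g := by simp [g, mul_assoc]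
  have hstep (w : W) : σ i' * w * σ i' = σ i ↔ w = σ i' * g := by
    constructor
    · intro h
      simp [g, ← h, mul_assoc]
    · rintro rfl
      simp [g, mul_assoc]
  clear_value g
  have hconj (w : W) (c : ℕ) :
      σ i * (σ i' * w * σ i') * σ i = σ i' * g ^ c ↔ w = σ i' * g ^ (c + 2) := by
    have key : g⁻¹ * (σ i' * g ^ c) * g = σ i' * g ^ (c + 2) := by
      rw [← mul_assoc, hg]; group
    rw [hconj_g, ← key]
    constructor
    · intro h; rw [← h]; group
    · rintro rfl; group
  induction q generalizing w ε with
  | zero => simp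
  | succ q ih =>
    rw [pow_succ, Equiv.Perm.mul_apply, Equiv.Perm.mul_apply, simplePerm_apply, simplePerm_apply,
      ih, hstep, Prod.mk.injEq]
    simp only [hconj]
    constructor
    · rw [hconj_g]; group
    · rw [Nat.mul_succ, Finset.prod_range_succ', Finset.prod_range_succ']
      simp only [zero_add, pow_one, pow_zero, mul_one]
      ac_rfl

open Classical in
theorem isLiftable_simplePerm : M.IsLiftable cs.simplePerm := by
  intro i i'
  have hm : (σ i * σ i') ^ M i i' = 1 := cs.simple_mul_simple_pow i i'
  ext ⟨w, ε⟩ : 1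
  rw [pow_simplePerm_mul_simplePerm_apply, hm, two_mul, Finset.prod_range_add]
  simp only [pow_add, hm, one_mul, Int.units_mul_self, mul_one, inv_one, Equiv.Perm.one_apply]

noncomputable def signRep : W →* Equiv.Perm (W × ℤˣ) := cs.lift ⟨cs.simplePerm, cs.isLiftable_simplePerm⟩

theorem signRep_simple (i : B) : cs.signRep (σ i) = cs.simplePerm i := cs.lift_apply_simple _ i

noncomputable def eta (w t : W) : ℤˣ := (cs.signRep w (t, 1)).2

open Classical in
theorem signRep_apply (w t : W) (ε : ℤˣ) : cs.signRep w (t, ε) = (w * t * w⁻¹, cs.eta w t * ε) := by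
  induction w using cs.simple_induction_left generalizing t ε with
  | one => simp [eta]
  | mul_simple_left w i ih =>
    have h (ε : ℤˣ) : cs.signRep (σ i * w) (t, ε) = (σ i * w * t * (σ i * w)⁻¹,
        ((if w * t * w⁻¹ = σ i then -1 else 1) * cs.eta w t) * ε) := by
      rw [map_mul, Equiv.Perm.mul_apply, ih, signRep_simple, simplePerm_apply, mul_assoc]
      simp [mul_assoc]
    rw [eta, h, h, mul_one]

theorem eta_mul (x y t : W) : cs.eta (x * y) t = cs.eta y t * cs.eta x (y * t * y⁻¹) := by
  have h : cs.signRep (x * y) (t, 1) = cs.signRep x (cs.signRep y (t, 1)) := by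
    rw [map_mul]; rfl
  rw [signRep_apply, signRep_apply cs y, signRep_apply] at h
  simpa [mul_comm] using congrArg Prod.snd h

theorem eta_one (t : W) : cs.eta 1 t = 1 := by simp [eta]

open Classical in
theorem eta_simple (i : B) (t : W) : cs.eta (σ i) t = if t = σ i then -1 else 1 := by
  simp [eta, signRep_simple, simplePerm_apply]

theorem eta_self_of_isReflection {t : W} (ht : cs.IsReflection t) : cs.eta t t = -1 := by
  obtain ⟨w, i, rfl⟩ := ht
  have hcancel : cs.eta w⁻¹ (w * σ i * w⁻¹) * cs.eta w (σ i) = 1 := by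
    have h := cs.eta_mul w w⁻¹ (w * σ i * w⁻¹)
    rw [mul_inv_cancel, eta_one] at h
    simpa [mul_assoc] using h.symm
  calc cs.eta (w * σ i * w⁻¹) (w * σ i * w⁻¹)
      = cs.eta w⁻¹ (w * σ i * w⁻¹) * (cs.eta (σ i) (σ i) * cs.eta w (σ i)) := by
        rw [eta_mul, eta_mul]; simp [mul_assoc]
    _ = -1 := by rw [eta_simple, if_pos rfl, mul_left_comm, hcancel]; simp

theorem eta_eq_one_of_mem_closure {S : Set B} {a t : W} (ha : a ∈ Subgroup.closure (cs.simple '' S))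
    (ht : t ∉ Subgroup.closure (cs.simple '' S)) : cs.eta a t = 1 := by
  induction ha using Subgroup.closure_induction generalizing t with
  | mem x hx =>
    obtain ⟨i, hi, rfl⟩ := hx
    rw [eta_simple, if_neg]
    rintro rfl
    exact ht (Subgroup.subset_closure ⟨i, hi, rfl⟩)
  | one => exact cs.eta_one t
  | mul x y hx hy ihx ihy =>
    rw [eta_mul, ihy ht, ihx, one_mul]
    intro hmem
    have := mul_mem (mul_mem (inv_mem hy) hmem) hy
    exact ht (by simpa [mul_assoc] using this)
  | inv x hx ih =>
    have h := cs.eta_mul x x⁻¹ t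
    rwa [mul_inv_cancel, eta_one, inv_inv, ih, mul_one, eq_comm] at h
    intro hmem
    have := mul_mem (mul_mem hx hmem) (inv_mem hx)
    exact ht (by simpa [mul_assoc] using this)

theorem eta_wordProd_eq_one_of_not_mem {ω : List B} {t : W} (ht : t ∉ cs.rightInvSeq ω) :
    cs.eta (π ω) t = 1 := by
  induction ω with
  | nil => exact cs.eta_one t
  | cons i ω ih =>
    rw [rightInvSeq, List.mem_cons, not_or] at ht
    rw [wordProd_cons, eta_mul, ih ht.2, eta_simple, if_neg ?_, one_mul]
    intro h
    exact ht.1 (by rw [← h]; group)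

theorem exists_getD_rightInvSeq_eq_of_eta_eq_neg_one {ω : List B} {t : W}
    (h : cs.eta (π ω) t = -1) : ∃ j < ω.length, (cs.rightInvSeq ω).getD j 1 = t := by
  have hmem : t ∈ cs.rightInvSeq ω := by
    by_contra hnot
    have := h ▸ cs.eta_wordProd_eq_one_of_not_mem hnot
    exact absurd this (by decide)
  obtain ⟨j, hj, rfl⟩ := List.getElem_of_mem hmem
  exact ⟨j, by simpa using hj, List.getD_eq_getElem _ _ hj⟩

theorem wordProd_mul_getD_rightInvSeq_eq (ω : List B) (j : ℕ) :
    π ω * (cs.rightInvSeq ω).getD j 1 = (cs.leftInvSeq ω).getD j 1 * π ω := by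
  rw [wordProd_mul_getD_rightInvSeq, getD_leftInvSeq_mul_wordProd]

theorem length_conj_le (x y : W) : ℓ (x * y * x⁻¹) ≤ 2 * ℓ x + ℓ y := by
  have h1 := cs.length_mul_le (x * y) x⁻¹
  have h2 := cs.length_mul_le x y
  rw [length_inv] at h1
  omega

theorem length_getD_map_simple_le (o : Option B) : ℓ ((o.map cs.simple).getD 1) ≤ 1 := by
  cases o <;> simp [length_simple]

theorem length_getD_leftInvSeq_le (ω : List B) (j : ℕ) :
    ℓ ((cs.leftInvSeq ω).getD j 1) ≤ 2 * j + 1 := by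
  rw [getD_leftInvSeq]
  have h1 := cs.length_conj_le (π (ω.take j)) ((ω[j]?.map cs.simple).getD 1)
  have h2 := cs.length_wordProd_le (ω.take j)
  have h3 := cs.length_getD_map_simple_le ω[j]?
  rw [List.length_take] at h2
  omega

theorem length_getD_rightInvSeq_le (ω : List B) (j : ℕ) :
    ℓ ((cs.rightInvSeq ω).getD j 1) ≤ 2 * (ω.length - (j + 1)) + 1 := by
  rw [getD_rightInvSeq]
  have h1 := cs.length_conj_le (π (ω.drop (j + 1)))⁻¹ ((ω[j]?.map cs.simple).getD 1)
  have h2 := cs.length_wordProd_le (ω.drop (j + 1))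
  have h3 := cs.length_getD_map_simple_le ω[j]?
  rw [inv_inv, length_inv] at h1
  rw [List.length_drop] at h2
  omega

namespace IsReflection

variable {cs} {t : W}

theorem exists_eq_conj_simple_length_eq (ht : cs.IsReflection t) :
    ∃ x m, t = x * σ m * x⁻¹ ∧ ℓ t = 2 * ℓ x + 1 := by
  obtain ⟨δ, hδ, rfl⟩ := cs.exists_isReduced t
  obtain ⟨j, hj, hget⟩ :=
    cs.exists_getD_rightInvSeq_eq_of_eta_eq_neg_one (cs.eta_self_of_isReflection ht)
  have hlis : (cs.leftInvSeq δ).getD j 1 = π δ := by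
    have := cs.wordProd_mul_getD_rightInvSeq_eq δ j
    rwa [hget, mul_left_inj, eq_comm] at this
  have herase : π (δ.take j) * π (δ.drop (j + 1)) = 1 := by
    rw [← wordProd_append, ← List.eraseIdx_eq_take_drop_succ, ← wordProd_mul_getD_rightInvSeq,
      hget, ht.mul_self]
  rw [List.getD_eq_getElem _ _ (by simpa using hj), cs.getElem_leftInvSeq δ j hj] at hlis
  refine ⟨π (δ.take j), δ[j], hlis.symm, le_antisymm ?_ ?_⟩
  · have := cs.length_conj_le (π (δ.take j)) (σ δ[j])
    rwa [hlis, length_simple] at this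
  · have hx : ℓ (π (δ.take j)) = ℓ (π (δ.drop (j + 1))) := by
      rw [eq_inv_of_mul_eq_one_left herase, length_inv]
    have h1 := cs.length_wordProd_le (δ.take j)
    have h2 := cs.length_wordProd_le (δ.drop (j + 1))
    rw [List.length_take] at h1
    rw [List.length_drop] at h2
    rw [hδ.eq]
    omega

theorem exists_isReduced_getD_leftInvSeq_eq (ht : cs.IsReflection t) :
    ∃ ω k, cs.IsReduced ω ∧ π ω = t ∧ ω.length = 2 * k + 1 ∧ (cs.leftInvSeq ω).getD k 1 = t := by
  obtain ⟨x, m, rfl, hlen⟩ := ht.exists_eq_conj_simple_length_eq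
  obtain ⟨ρ, hρ, rfl⟩ := cs.exists_isReduced x
  have hπ : π (ρ ++ m :: ρ.reverse) = π ρ * σ m * (π ρ)⁻¹ := by
    simp [wordProd_append, wordProd_cons, wordProd_reverse, mul_assoc]
  refine ⟨ρ ++ m :: ρ.reverse, ρ.length, ?_, hπ, by simp; ring, ?_⟩
  · rw [IsReduced, hπ, hlen, hρ.eq]
    simp; ring
  · rw [getD_leftInvSeq]
    simp

end IsReflection

theorem eq_of_eq_mul_of_mem_closure {S : Set B} {s s' a : W} (hs : cs.IsReflection s)
    (hs' : cs.IsReflection s') (hsS : s ∉ Subgroup.closure (cs.simple '' S))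
    (hs'S : s' ∉ Subgroup.closure (cs.simple '' S)) (ha : a ∈ Subgroup.closure (cs.simple '' S))
    (h : s' = s * a) : s' = s := by
  induction hn : ℓ s using Nat.strong_induction_on generalizing s s' a with
  | _ n ih =>
  have has : a * s * a = s := by
    calc a * s * a = s⁻¹ * (s' * s') := by rw [h]; group
      _ = s := by rw [hs'.mul_self, mul_one, hs.inv]
  have hsign : cs.eta s (a * s) = -1 := by
    have := cs.eta_mul s a s'
    rwa [← h, cs.eta_self_of_isReflection hs', cs.eta_eq_one_of_mem_closure ha hs'S, one_mul, h,
      show a * (s * a) * a⁻¹ = a * s by group, eq_comm] at this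
  obtain ⟨ω, k, hω, hπ, hlen, hmid⟩ := hs.exists_isReduced_getD_leftInvSeq_eq
  obtain ⟨j, hj, hget⟩ :=
    cs.exists_getD_rightInvSeq_eq_of_eta_eq_neg_one (show cs.eta (π ω) (a * s) = -1 by rwa [hπ])
  have hlis : (cs.leftInvSeq ω).getD j 1 = s' := by
    have := cs.wordProd_mul_getD_rightInvSeq_eq ω j
    rw [hget, hπ, ← mul_assoc, mul_left_inj] at this
    rw [← this, h]
  have hn' : n = 2 * k + 1 := by rw [← hn, ← hπ, hω.eq, hlen]
  rcases lt_trichotomy j k with hjk | rfl | hkj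
  · have hlt : ℓ s' < n := by have := cs.length_getD_leftInvSeq_le ω j; rw [hlis] at this; omega
    exact (ih _ hlt hs' hs hs'S hsS (inv_mem ha) (by rw [h]; group) rfl).symm
  · rw [← hlis, hmid]
  · have hr : cs.IsReflection (a * s) := by
      simpa [h, mul_assoc] using hs'.conj a
    have hrS : a * s ∉ Subgroup.closure (cs.simple '' S) := fun hmem =>
      hsS (by simpa using mul_mem (inv_mem ha) hmem)
    have hlt : ℓ (a * s) < n := by
      have := cs.length_getD_rightInvSeq_le ω j; rw [hget] at this; omega
    have := ih _ hlt hr hs hrS hsS ha has.symm rfl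
    rw [h, right_eq_mul.mp this, mul_one]

end CoxeterSystem

theorem reflection_coset_claim_general {B W : Type*} [Group W] {M : CoxeterMatrix B}
    (cs : CoxeterSystem M W) (ΔP : Set B)
    (WP : Subgroup W) (hWP : WP = Subgroup.closure (cs.simple '' ΔP))
    (s s' : W) (hs : cs.IsReflection s) (hs' : cs.IsReflection s')
    (hsP : s ∉ WP) (hs'P : s' ∉ WP)
    (a : W) (ha : a ∈ WP) (h : s' = s * a) : s' = s := by
  subst hWP
  exact cs.eq_of_eq_mul_of_mem_closure hs hs' hsP hs'P ha h

theorem reflection_coset_claim {B W : Type*} [Group W] [Finite W] {M : CoxeterMatrix B}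
    (cs : CoxeterSystem M W) (ΔP : Set B)
    (WP : Subgroup W) (hWP : WP = Subgroup.closure (cs.simple '' ΔP))
    (s s' : W) (hs : cs.IsReflection s) (hs' : cs.IsReflection s')
    (hsP : s ∉ WP) (hs'P : s' ∉ WP)
    (a : W) (ha : a ∈ WP) (h : s' = s * a) : s' = s :=
  reflection_coset_claim_general cs ΔP WP hWP s s' hs hs' hsP hs'P a ha h
end

section
/- Fix r ≤ n, and let u and v be cosets in S_n/(S_r×S_{n−r}) corresponding to subsets I and J with I ∪ {q} = J ∪ {p} for some p ∈ I∖J, q ∈ J∖I, p < q. Then the Young diagram of λ(u) is obtained from the Young diagram of λ(v) by removing a rim hook (a connected border strip) of q − p boxes; in particular λ(u) ⊆ λ(v) and |λ(v)| − |λ(u)| = q − p. -/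
/- STATEMENT 12: Fix r ≤ n, and let u and v be cosets in S_n/(S_r×S_{n−r}), identified with
r-element subsets I and J of {1,…,n}, with I ∪ {q} = J ∪ {p} for some p ∈ I∖J, q ∈ J∖I,
p < q.  Then the Young diagram of λ(u) is obtained from the Young diagram of λ(v) by
removing a rim hook (a connected border strip: a connected skew shape with no 2×2 square)
of q − p boxes; in particular λ(u) ⊆ λ(v) and |λ(v)| − |λ(u)| = q − p. -/

/-- The partition associated to an r-element subset `I` of Fin n: if the elements of `I`
in increasing order are a₁ < … < a_r (0-indexed values), then
λ i = a_{r−1−i} − (r−1−i).  (This is the partition of the minimal-length coset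
representative with image `I` on the first r positions.) -/
def subsetToPartition {n : ℕ} (r : ℕ) (I : Finset (Fin n)) (h : I.card = r) : Fin r → ℕ :=
  fun i => ((I.orderIsoOfFin h ⟨r - 1 - i.val, by have := i.isLt; omega⟩ : Fin n)).val -
    (r - 1 - i.val)

/-- The set of cells (row, column) of the Young diagram of λ. -/
def cells {r : ℕ} (lam : Fin r → ℕ) : Set (ℕ × ℕ) :=
  {c : ℕ × ℕ | ∃ i : Fin r, c.1 = i.val ∧ c.2 < lam i}

/-- Two cells are adjacent if they differ by 1 in exactly one coordinate. -/
def CellAdj (a b : ℕ × ℕ) : Prop :=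
  (a.1 = b.1 ∧ (a.2 = b.2 + 1 ∨ b.2 = a.2 + 1)) ∨
  (a.2 = b.2 ∧ (a.1 = b.1 + 1 ∨ b.1 = a.1 + 1))

/-- A rim hook (border strip): a nonempty, edge-connected set of cells containing
no 2×2 square. -/
def IsRimHook (S : Set (ℕ × ℕ)) : Prop :=
  S.Nonempty ∧
  (∀ a ∈ S, ∀ b ∈ S, Relation.ReflTransGen (fun x y => x ∈ S ∧ y ∈ S ∧ CellAdj x y) a b) ∧
  (∀ i j : ℕ, ¬((i, j) ∈ S ∧ (i + 1, j) ∈ S ∧ (i, j + 1) ∈ S ∧ (i + 1, j + 1) ∈ S))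

/-! Write `g_s(v)` for the number of elements of `s` that are `≤ v`. A cell `(i, c)` lies in the
diagram of `λ(s)` iff `g_s(c + r - 1 - i) + i < r`, so along each diagonal `d = c + r - 1 - i`
the diagram is cut off at row `r - g_s(d)`. Trading `p` for `q` lowers `g` by one exactly on
`[p, q)`, so the two diagrams differ by one cell on each diagonal `d ∈ [p, q)`, namely
`(r - g_I(d), d + 1 - g_I(d))`. As `d` grows by one this cell moves one step right or one step
up; hence these `q - p` cells form a connected strip, with one cell per diagonal and therefore
no `2 × 2` square. -/

open Finset

def RimStep (x y : ℕ × ℕ) : Prop :=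
  (y.1 = x.1 ∧ y.2 = x.2 + 1) ∨ (y.1 + 1 = x.1 ∧ y.2 = x.2)

namespace RimStep

variable {x y : ℕ × ℕ}

theorem cellAdj (h : RimStep x y) : CellAdj x y := by
  unfold RimStep at h; unfold CellAdj; omega

theorem cellAdj_symm (h : RimStep x y) : CellAdj y x := by
  unfold RimStep at h; unfold CellAdj; omega

theorem content_eq (h : RimStep x y) : (y.2 : ℤ) - y.1 = x.2 - x.1 + 1 := by
  rcases h with ⟨h1, h2⟩ | ⟨h1, h2⟩ <;> omega

end RimStep

section RimPath

variable {γ : ℕ → ℕ × ℕ} (hγ : ∀ v, RimStep (γ v) (γ (v + 1)))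
include hγ

theorem content_rimPath (v : ℕ) : ((γ v).2 : ℤ) - (γ v).1 = (γ 0).2 - (γ 0).1 + v := by
  induction v with
  | zero => simp
  | succ v ih => rw [(hγ v).content_eq, ih]; push_cast; ring

theorem injective_rimPath : Function.Injective γ := by
  intro v w h
  have := content_rimPath hγ v
  rw [h, content_rimPath hγ w] at this
  omega

theorem reflTransGen_rimPath {a b : ℕ} {v w : ℕ} (hav : a ≤ v) (hvw : v ≤ w) (hwb : w < b) :
    let R := fun x y => x ∈ γ '' Set.Ico a b ∧ y ∈ γ '' Set.Ico a b ∧ CellAdj x y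
    Relation.ReflTransGen R (γ v) (γ w) ∧ Relation.ReflTransGen R (γ w) (γ v) := by
  intro R
  induction w, hvw using Nat.le_induction with
  | base => exact ⟨.refl, .refl⟩
  | succ w hvw ih =>
    have hw : γ w ∈ γ '' Set.Ico a b := ⟨w, ⟨by omega, by omega⟩, rfl⟩
    have hw' : γ (w + 1) ∈ γ '' Set.Ico a b := ⟨w + 1, ⟨by omega, hwb⟩, rfl⟩
    obtain ⟨hfwd, hbwd⟩ := ih (by omega)
    exact ⟨hfwd.tail ⟨hw, hw', (hγ w).cellAdj⟩, hbwd.head ⟨hw', hw, (hγ w).cellAdj_symm⟩⟩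

theorem isRimHook_image_Ico {a b : ℕ} (hab : a < b) : IsRimHook (γ '' Set.Ico a b) := by
  refine ⟨⟨γ a, a, ⟨le_rfl, hab⟩, rfl⟩, ?_, ?_⟩
  · rintro _ ⟨v, ⟨hav, hvb⟩, rfl⟩ _ ⟨w, ⟨haw, hwb⟩, rfl⟩
    rcases le_total v w with hvw | hwv
    · exact (reflTransGen_rimPath hγ hav hvw hwb).1
    · exact (reflTransGen_rimPath hγ haw hwv hvb).2
  · rintro i j ⟨⟨v, -, hv⟩, -, -, ⟨w, -, hw⟩⟩
    have hcv := content_rimPath hγ v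
    have hcw := content_rimPath hγ w
    rw [hv] at hcv
    rw [hw] at hcw
    obtain rfl : v = w := by simp only at hcv hcw; omega
    simp [hv] at hw

theorem ncard_image_Ico_rimPath (a b : ℕ) : (γ '' Set.Ico a b).ncard = b - a := by
  rw [Set.ncard_image_of_injective _ (injective_rimPath hγ), Set.ncard_Ico_nat]

end RimPath

section CountLE

variable {n : ℕ}

def countLE (s : Finset (Fin n)) (v : ℕ) : ℕ :=
  #{x ∈ s | x.val ≤ v}

theorem countLE_le_card (s : Finset (Fin n)) (v : ℕ) : countLE s v ≤ s.card :=
  card_filter_le _ _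

theorem countLE_le_succ (s : Finset (Fin n)) (v : ℕ) : countLE s v ≤ v + 1 := by
  simpa [countLE] using card_le_card_of_injOn Fin.val (s := {x ∈ s | x.val ≤ v}) (t := range (v + 1))
    (fun x hx => by simp only [coe_filter, Set.mem_ofPred_eq] at hx; simp; omega)
    Fin.val_injective.injOn

theorem countLE_mono (s : Finset (Fin n)) {v w : ℕ} (h : v ≤ w) : countLE s v ≤ countLE s w :=
  card_le_card (monotone_filter_right _ fun _ _ hx => le_trans hx h)

theorem countLE_succ_le (s : Finset (Fin n)) (v : ℕ) : countLE s (v + 1) ≤ countLE s v + 1 := by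
  have hsplit : {x ∈ s | x.val ≤ v + 1} = {x ∈ s | x.val ≤ v} ∪ {x ∈ s | x.val = v + 1} := by
    rw [← filter_or]; congr! 2; omega
  have hone : #{x ∈ s | x.val = v + 1} ≤ 1 :=
    card_le_one.mpr fun a ha b hb => Fin.ext <| by simp only [mem_filter] at ha hb; omega
  unfold countLE
  rw [hsplit]
  exact (card_union_le _ _).trans (by omega)

theorem countLE_insert {s : Finset (Fin n)} {x : Fin n} (hx : x ∉ s) (v : ℕ) :
    countLE (insert x s) v = countLE s v + if x.val ≤ v then 1 else 0 := by
  unfold countLE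
  rw [filter_insert]
  split_ifs with h
  · exact card_insert_of_notMem fun hmem => hx (mem_filter.mp hmem).1
  · rfl

theorem orderEmbOfFin_le_iff {r : ℕ} (s : Finset (Fin n)) (h : s.card = r) (j : Fin r) (v : ℕ) :
    (s.orderEmbOfFin h j).val ≤ v ↔ j.val < countLE s v := by
  have hcount : countLE s v = #{i : Fin r | (s.orderEmbOfFin h i).val ≤ v} := by
    conv_lhs => rw [countLE, ← map_orderEmbOfFin_univ s h, filter_map, card_map]
    rfl
  rw [hcount]
  constructor
  · intro hj
    have hsub : Iic j ⊆ ({i | (s.orderEmbOfFin h i).val ≤ v} : Finset (Fin r)) := fun i hi => by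
      simp only [mem_filter, mem_univ, true_and]
      exact le_trans ((s.orderEmbOfFin h).monotone (mem_Iic.mp hi)) hj
    simpa using card_le_card hsub
  · intro hj
    by_contra! hvj
    have hsub : ({i | (s.orderEmbOfFin h i).val ≤ v} : Finset (Fin r)) ⊆ Iio j := fun i hi => by
      simp only [mem_filter, mem_univ, true_and] at hi
      exact mem_Iio.mpr ((s.orderEmbOfFin h).lt_iff_lt.mp (Fin.lt_def.mpr (by omega)))
    have := card_le_card hsub
    simp only [Fin.card_Iio] at this
    omega

end CountLE

theorem le_of_cells_subset {r : ℕ} {lam mu : Fin r → ℕ} (h : cells lam ⊆ cells mu) (i : Fin r) :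
    lam i ≤ mu i := by
  by_contra! hlt
  obtain ⟨i', hi', hlt'⟩ := h (show (i.val, mu i) ∈ cells lam from ⟨i, rfl, hlt⟩)
  obtain rfl : i' = i := Fin.ext hi'.symm
  omega

theorem mem_cells_subsetToPartition_iff {n r : ℕ} (s : Finset (Fin n)) (h : s.card = r)
    (x : ℕ × ℕ) : x ∈ cells (subsetToPartition r s h) ↔ countLE s (x.2 + (r - 1 - x.1)) + x.1 < r := by
  obtain ⟨i, c⟩ := x
  simp only [cells, subsetToPartition, Finset.coe_orderIsoOfFin_apply, Set.mem_ofPred_eq]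
  constructor
  · rintro ⟨i, rfl, hc⟩
    have := (orderEmbOfFin_le_iff s h ⟨r - 1 - i, by omega⟩ (c + (r - 1 - i))).not
    simp only at this
    omega
  · intro hlt
    refine ⟨⟨i, by omega⟩, rfl, ?_⟩
    have := (orderEmbOfFin_le_iff s h ⟨r - 1 - i, by omega⟩ (c + (r - 1 - i))).not
    simp only at this ⊢
    omega

section OuterRim

variable {n r : ℕ}

/-- The first cell outside the diagram of `subsetToPartition r s _` on the diagonal
`{(i, c) | c + (r - 1 - i) = v}`, provided `s` has an element `≤ v`. -/
def outerRimCell (r : ℕ) (s : Finset (Fin n)) (v : ℕ) : ℕ × ℕ :=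
  (r - countLE s v, v + 1 - countLE s v)

theorem rimStep_outerRimCell {s : Finset (Fin n)} (hs : s.card ≤ r) (v : ℕ) :
    RimStep (outerRimCell r s v) (outerRimCell r s (v + 1)) := by
  have := countLE_mono s (Nat.le_add_right v 1)
  have := countLE_succ_le s v
  have := countLE_le_card s (v + 1)
  have := countLE_le_succ s v
  unfold RimStep outerRimCell
  omega

end OuterRim

theorem countLE_add_ite_of_union_eq {n : ℕ} {I J : Finset (Fin n)} {p q : Fin n} (hpJ : p ∉ J)
    (hqI : q ∉ I) (hunion : I ∪ {q} = J ∪ {p}) (v : ℕ) :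
    countLE J v + (if p.val ≤ v then 1 else 0) = countLE I v + if q.val ≤ v then 1 else 0 := by
  rw [← countLE_insert hpJ, ← countLE_insert hqI, insert_eq, insert_eq, union_comm {p},
    union_comm {q}, hunion]

section Exchange

variable {n r : ℕ} {s t : Finset (Fin n)} {a b : ℕ}
  (hcount : ∀ v, countLE t v + (if a ≤ v then 1 else 0) = countLE s v + if b ≤ v then 1 else 0)
  (hs : s.card = r) (ht : t.card = r)
include hcount

theorem cells_subset_of_countLE (hab : a ≤ b) :
    cells (subsetToPartition r s hs) ⊆ cells (subsetToPartition r t ht) := by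
  intro x
  rw [mem_cells_subsetToPartition_iff, mem_cells_subsetToPartition_iff]
  have := hcount (x.2 + (r - 1 - x.1))
  split_ifs at this <;> omega

theorem cells_diff_eq_image_outerRimCell :
    cells (subsetToPartition r t ht) \ cells (subsetToPartition r s hs) =
      outerRimCell r s '' Set.Ico a b := by
  ext ⟨i, c⟩
  simp only [Set.mem_sdiff, mem_cells_subsetToPartition_iff, Set.mem_image, Set.mem_Ico,
    outerRimCell, Prod.mk.injEq]
  constructor
  · rintro ⟨hti, hsi⟩
    have := hcount (c + (r - 1 - i))
    refine ⟨c + (r - 1 - i), ?_⟩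
    split_ifs at this <;> omega
  · rintro ⟨v, ⟨hav, hvb⟩, rfl, rfl⟩
    have hv := hcount v
    rw [if_pos hav, if_neg (by omega)] at hv
    have := countLE_le_card s v
    have := countLE_le_succ s v
    have hdiag : v + 1 - countLE s v + (r - 1 - (r - countLE s v)) = v := by omega
    rw [hdiag]
    omega

end Exchange

theorem rim_hook_removal_general {n r : ℕ}
    (I J : Finset (Fin n)) (hI : I.card = r) (hJ : J.card = r)
    (p q : Fin n) (hp : p ∈ I \ J) (hq : q ∈ J \ I) (hpq : p < q)
    (hunion : I ∪ {q} = J ∪ {p}) :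
    (∀ i : Fin r, subsetToPartition r I hI i ≤ subsetToPartition r J hJ i) ∧
    IsRimHook (cells (subsetToPartition r J hJ) \ cells (subsetToPartition r I hI)) ∧
    (cells (subsetToPartition r J hJ) \ cells (subsetToPartition r I hI)).ncard =
      q.val - p.val := by
  have hcount := countLE_add_ite_of_union_eq (mem_sdiff.mp hp).2 (mem_sdiff.mp hq).2 hunion
  have hpath := rimStep_outerRimCell hI.le
  refine ⟨le_of_cells_subset (cells_subset_of_countLE hcount hI hJ hpq.le), ?_⟩
  rw [cells_diff_eq_image_outerRimCell hcount hI hJ]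
  exact ⟨isRimHook_image_Ico hpath hpq, ncard_image_Ico_rimPath hpath _ _⟩

theorem rim_hook_removal {n r : ℕ} (hr : r ≤ n)
    (I J : Finset (Fin n)) (hI : I.card = r) (hJ : J.card = r)
    (p q : Fin n) (hp : p ∈ I \ J) (hq : q ∈ J \ I) (hpq : p < q)
    (hunion : I ∪ {q} = J ∪ {p}) :
    (∀ i : Fin r, subsetToPartition r I hI i ≤ subsetToPartition r J hJ i) ∧
    IsRimHook (cells (subsetToPartition r J hJ) \ cells (subsetToPartition r I hI)) ∧
    (cells (subsetToPartition r J hJ) \ cells (subsetToPartition r I hI)).ncard =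
      q.val - p.val :=
  rim_hook_removal_general I J hI hJ p q hp hq hpq hunion
end
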